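/- arXiv:1604.05135 — 4 statements merged into one kernel-verified Lean document; each statement's English description precedes it below -/
import Mathlib

section
/- Let A, B, C be finite loopless simple graphs, f : A → B and g : A → C graph homomorphisms, G the pushout of f and g (the quotient of the disjoint union B ⊔ C identifying f(a) with g(a) for all vertices a of A), and D_n the double mapping cylinder of height n ≥ 1 of f and g. If G is a simple graph, then the chromatic number of G is at least the chromatic number of D_n: χ(G) ≥ χ(D_n). -/
/-- A graph (possibly with loops) on vertex type `V`. -/
structure LGraph (V : Type) where
  Adj : V → V → Prop
  symm : ∀ {x y}, Adj x y → Adj y x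

/-- A graph homomorphism. -/
structure GHom {V W : Type} (G : LGraph V) (H : LGraph W) where
  toFun : V → W
  map_adj : ∀ {x y}, G.Adj x y → H.Adj (toFun x) (toFun y)

/-- The complete graph `K_k` as a `Graph`. -/
def completeG (k : ℕ) : LGraph (Fin k) :=
  ⟨fun i j => i ≠ j, fun h => Ne.symm h⟩

/-- `Colorable G k` iff there is a homomorphism `G → K_k`. -/
def LGraph.Colorable {V : Type} (G : LGraph V) (k : ℕ) : Prop :=
  Nonempty (GHom G (completeG k))

/-- The chromatic number: least `k` admitting a proper colouring. -/
noncomputable def chromNum {V : Type} (G : LGraph V) : ℕ :=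
  sInf {k | G.Colorable k}

/-- The categorical product `A × I_n`, where `I_n` is the looped path on `{0, …, n}`. -/
def LGraph.prodIn {V : Type} (A : LGraph V) (n : ℕ) : LGraph (V × Fin (n + 1)) :=
  ⟨fun p q => A.Adj p.1 q.1 ∧ |(p.2 : ℤ) - (q.2 : ℤ)| ≤ 1, by
    rintro ⟨a, i⟩ ⟨b, j⟩ ⟨h1, h2⟩
    exact ⟨A.symm h1, by rwa [abs_sub_comm]⟩⟩

section Cyl
variable {VA VB VC : Type}

/-- Generating relation for the double mapping cylinder: `f a ∼ (a, n)` and `g a ∼ (a, 0)`. -/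
def cylRel (f : VA → VB) (g : VA → VC) (n : ℕ) :
    (VB ⊕ (VA × Fin (n + 1)) ⊕ VC) → (VB ⊕ (VA × Fin (n + 1)) ⊕ VC) → Prop :=
  fun x y =>
    (∃ a, x = Sum.inl (f a) ∧ y = Sum.inr (Sum.inl (a, Fin.last n))) ∨
    (∃ a, x = Sum.inr (Sum.inr (g a)) ∧ y = Sum.inr (Sum.inl (a, 0)))

/-- Vertices of the double mapping cylinder `D_n`. -/
def CylVert (f : VA → VB) (g : VA → VC) (n : ℕ) : Type :=
  Quot (cylRel f g n)

/-- Adjacency on the disjoint union `B ⊔ (A × I_n) ⊔ C`. -/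
def cylBaseAdj (A : LGraph VA) (B : LGraph VB) (C : LGraph VC) (n : ℕ) :
    (VB ⊕ (VA × Fin (n + 1)) ⊕ VC) → (VB ⊕ (VA × Fin (n + 1)) ⊕ VC) → Prop
  | Sum.inl b, Sum.inl b' => B.Adj b b'
  | Sum.inr (Sum.inl p), Sum.inr (Sum.inl q) => (A.prodIn n).Adj p q
  | Sum.inr (Sum.inr c), Sum.inr (Sum.inr c') => C.Adj c c'
  | _, _ => False

/-- The double mapping cylinder `D_n = B ⊔_f (A × I_n) ⊔_g C` of `f : A → B`, `g : A → C`. -/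
def cylGraph (A : LGraph VA) (B : LGraph VB) (C : LGraph VC)
    (f : VA → VB) (g : VA → VC) (n : ℕ) : LGraph (CylVert f g n) :=
  ⟨fun x y => ∃ x₀ y₀, Quot.mk _ x₀ = x ∧ Quot.mk _ y₀ = y ∧ cylBaseAdj A B C n x₀ y₀, by
    rintro x y ⟨x₀, y₀, hx, hy, h⟩
    refine ⟨y₀, x₀, hy, hx, ?_⟩
    rcases x₀ with b | p | c <;> rcases y₀ with b' | p' | c' <;>
      simp only [cylBaseAdj] at h ⊢
    · exact B.symm h
    · exact (A.prodIn n).symm h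
    · exact C.symm h⟩

/-- Generating relation for the pushout: `f a ∼ g a`. -/
def pushRel (f : VA → VB) (g : VA → VC) : (VB ⊕ VC) → (VB ⊕ VC) → Prop :=
  fun x y => ∃ a, x = Sum.inl (f a) ∧ y = Sum.inr (g a)

/-- Vertices of the pushout graph. -/
def PushVert (f : VA → VB) (g : VA → VC) : Type := Quot (pushRel f g)

def pushBaseAdj (B : LGraph VB) (C : LGraph VC) : (VB ⊕ VC) → (VB ⊕ VC) → Prop
  | Sum.inl b, Sum.inl b' => B.Adj b b'
  | Sum.inr c, Sum.inr c' => C.Adj c c'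
  | _, _ => False

/-- The pushout graph `G = B ⊔_A C` of `f : A → B`, `g : A → C`. -/
def pushGraph (B : LGraph VB) (C : LGraph VC) (f : VA → VB) (g : VA → VC) :
    LGraph (PushVert f g) :=
  ⟨fun x y => ∃ x₀ y₀, Quot.mk _ x₀ = x ∧ Quot.mk _ y₀ = y ∧ pushBaseAdj B C x₀ y₀, by
    rintro x y ⟨x₀, y₀, hx, hy, h⟩
    refine ⟨y₀, x₀, hy, hx, ?_⟩
    rcases x₀ with b | c <;> rcases y₀ with b' | c' <;> simp only [pushBaseAdj] at h ⊢
    · exact B.symm h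
    · exact C.symm h⟩

end Cyl

namespace GHom

variable {U V W : Type} {G : LGraph U} {H : LGraph V} {K : LGraph W}

def comp (φ : GHom H K) (ψ : GHom G H) : GHom G K :=
  ⟨φ.toFun ∘ ψ.toFun, fun h => φ.map_adj (ψ.map_adj h)⟩

end GHom

namespace LGraph

variable {V W : Type} {G : LGraph V} {H : LGraph W}

theorem Colorable.of_hom {k : ℕ} (φ : GHom G H) (hH : H.Colorable k) : G.Colorable k :=
  let ⟨ψ⟩ := hH; ⟨ψ.comp φ⟩

theorem colorable_natCard_of_loopless [Finite V] (h : ∀ v, ¬ G.Adj v v) :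
    G.Colorable (Nat.card V) :=
  ⟨⟨Finite.equivFin V, fun {x _} hxy he => h x (Finite.equivFin V |>.injective he ▸ hxy)⟩⟩

end LGraph

/-- Beware that `chromNum H = 0` when `H` is not colourable at all, hence the hypothesis. -/
theorem chromNum_le_of_hom {V W : Type} {G : LGraph V} {H : LGraph W} (φ : GHom G H)
    (hH : ∃ k, H.Colorable k) : chromNum G ≤ chromNum H :=
  Nat.sInf_le (LGraph.Colorable.of_hom φ (Nat.sInf_mem hH))

section Collapse

variable {VA VB VC : Type}

instance [Finite VB] [Finite VC] (f : VA → VB) (g : VA → VC) : Finite (PushVert f g) :=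
  Quot.finite _

/-- Collapses each segment `{a} × I_n` of the cylinder onto `f a`, which equals `g a` in the
pushout. -/
def cylToPushBase (f : VA → VB) (g : VA → VC) (n : ℕ) :
    (VB ⊕ (VA × Fin (n + 1)) ⊕ VC) → PushVert f g
  | Sum.inl b => Quot.mk _ (Sum.inl b)
  | Sum.inr (Sum.inl p) => Quot.mk _ (Sum.inl (f p.1))
  | Sum.inr (Sum.inr c) => Quot.mk _ (Sum.inr c)

theorem cylToPushBase_eq_of_cylRel (f : VA → VB) (g : VA → VC) (n : ℕ) {x y}
    (h : cylRel f g n x y) : cylToPushBase f g n x = cylToPushBase f g n y := by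
  rcases h with ⟨a, rfl, rfl⟩ | ⟨a, rfl, rfl⟩
  · rfl
  · exact (Quot.sound ⟨a, rfl, rfl⟩).symm

def cylToPush (A : LGraph VA) (B : LGraph VB) (C : LGraph VC) (f : GHom A B) (g : VA → VC)
    (n : ℕ) : GHom (cylGraph A B C f.toFun g n) (pushGraph B C f.toFun g) where
  toFun := Quot.lift (cylToPushBase f.toFun g n) fun _ _ => cylToPushBase_eq_of_cylRel _ _ _
  map_adj := by
    rintro _ _ ⟨x, y, rfl, rfl, h⟩
    rcases x with b | ⟨a, i⟩ | c <;> rcases y with b' | ⟨a', j⟩ | c' <;>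
      simp only [cylBaseAdj] at h
    · exact ⟨Sum.inl b, Sum.inl b', rfl, rfl, h⟩
    · exact ⟨Sum.inl (f.toFun a), Sum.inl (f.toFun a'), rfl, rfl, f.map_adj h.1⟩
    · exact ⟨Sum.inr c, Sum.inr c', rfl, rfl, h⟩

end Collapse

theorem chromNum_cyl_le_chromNum_pushout_general {VA VB VC : Type}
    [Fintype VB] [Fintype VC]
    (A : LGraph VA) (B : LGraph VB) (C : LGraph VC)
    (f : GHom A B) (g : GHom A C) (n : ℕ)
    (hsimple : ∀ v, ¬ (pushGraph B C f.toFun g.toFun).Adj v v) :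
    chromNum (cylGraph A B C f.toFun g.toFun n) ≤ chromNum (pushGraph B C f.toFun g.toFun) :=
  chromNum_le_of_hom (cylToPush A B C f g.toFun n)
    ⟨_, LGraph.colorable_natCard_of_loopless hsimple⟩

/-- If the pushout `G` of `f : A → B`, `g : A → C` is a simple (loopless)
graph, then its chromatic number is at least that of the double mapping cylinder `D_n`
(of height `n ≥ 1`). -/
theorem chromNum_cyl_le_chromNum_pushout {VA VB VC : Type}
    [Fintype VA] [Fintype VB] [Fintype VC]
    (A : LGraph VA) (B : LGraph VB) (C : LGraph VC)
    (hA : ∀ v, ¬ A.Adj v v) (hB : ∀ v, ¬ B.Adj v v) (hC : ∀ v, ¬ C.Adj v v)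
    (f : GHom A B) (g : GHom A C) (n : ℕ) (hn : 1 ≤ n)
    (hsimple : ∀ v, ¬ (pushGraph B C f.toFun g.toFun).Adj v v) :
    chromNum (cylGraph A B C f.toFun g.toFun n) ≤ chromNum (pushGraph B C f.toFun g.toFun) :=
  chromNum_cyl_le_chromNum_pushout_general A B C f g n hsimple
end

section
/- A loopless connected finite simple graph G is bipartite if and only if its neighbourhood complex N(G) is disconnected (as a topological space / simplicial complex). -/
/-!
Two vertices share a simplex of `N(G)` exactly when they are joined by a walk of length two,
so the chain-connectivity relation of `N(G)` is "joined by a walk of even length". If `G` is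
bipartite, the two ends of an edge are never joined by an even walk, so `N(G)` is
disconnected. Conversely, in a connected non-bipartite graph an odd closed walk can be spliced
into any odd walk to make it even, so any two vertices are joined by an even walk and `N(G)`
is connected.
-/

variable {V : Type*}

/-- Two vertices share a simplex of the neighbourhood complex `N(G)` iff they have a
common neighbour in `G`. -/
def shareSimplex (G : SimpleGraph V) (u v : V) : Prop :=
  ∃ w, G.Adj w u ∧ G.Adj w v

/-- A vertex belongs to the neighbourhood complex iff it has a neighbour. -/
def isNVertex (G : SimpleGraph V) (u : V) : Prop := ∃ x, G.Adj u x

/-- The neighbourhood complex `N(G)` is connected: its vertex set is nonempty and any two of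
its vertices are joined by a chain of vertices in which consecutive ones share a simplex. -/
def NbhdConnected (G : SimpleGraph V) : Prop :=
  (∃ u, isNVertex G u) ∧
    ∀ u v, isNVertex G u → isNVertex G v → Relation.ReflTransGen (shareSimplex G) u v

open SimpleGraph Relation

section

variable {G : SimpleGraph V}

theorem SimpleGraph.Walk.reflTransGen_shareSimplex_of_even_length :
    ∀ {u v : V} (p : G.Walk u v), Even p.length → ReflTransGen (shareSimplex G) u v
  | _, _, .nil, _ => .refl
  | _, _, .cons _ .nil, hp => absurd hp (by simp)
  | _, _, .cons h (.cons h' q), hp =>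
      .head ⟨_, h.symm, h'⟩
        (q.reflTransGen_shareSimplex_of_even_length (by simpa [Nat.even_add_one] using hp))

theorem exists_even_walk_of_reflTransGen_shareSimplex {u v : V}
    (h : ReflTransGen (shareSimplex G) u v) : ∃ p : G.Walk u v, Even p.length := by
  induction h with
  | refl => exact ⟨.nil, by simp⟩
  | tail _ hvw ih =>
    obtain ⟨p, hp⟩ := ih
    obtain ⟨x, hxv, hxw⟩ := hvw
    exact ⟨p.append (.cons hxv.symm (.cons hxw .nil)), by simpa using hp.add even_two⟩

theorem reflTransGen_shareSimplex_iff_exists_even_walk {u v : V} :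
    ReflTransGen (shareSimplex G) u v ↔ ∃ p : G.Walk u v, Even p.length :=
  ⟨exists_even_walk_of_reflTransGen_shareSimplex,
    fun ⟨p, hp⟩ => p.reflTransGen_shareSimplex_of_even_length hp⟩

theorem SimpleGraph.Preconnected.exists_even_walk_of_odd_loop (hG : G.Preconnected) {w : V}
    (c : G.Walk w w) (hc : Odd c.length) (u v : V) : ∃ p : G.Walk u v, Even p.length := by
  obtain ⟨p⟩ := hG u v
  obtain ⟨q⟩ := hG u w
  rcases Nat.even_or_odd p.length with hp | hp
  · exact ⟨p, hp⟩
  · refine ⟨(q.append (c.append q.reverse)).append p, ?_⟩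
    obtain ⟨a, ha⟩ := hc
    obtain ⟨b, hb⟩ := hp
    exact ⟨q.length + a + b + 1, by simp only [Walk.length_append, Walk.length_reverse]; omega⟩

theorem nbhdConnected_iff_exists_odd_loop (hG : G.Preconnected) :
    NbhdConnected G ↔ ∃ w, ∃ c : G.Walk w w, Odd c.length := by
  constructor
  · rintro ⟨⟨u, x, hux⟩, hchain⟩
    obtain ⟨p, hp⟩ := reflTransGen_shareSimplex_iff_exists_even_walk.1
      (hchain u x ⟨x, hux⟩ ⟨u, hux.symm⟩)
    exact ⟨u, p.concat hux.symm, by simpa using hp.add_one⟩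
  · rintro ⟨w, c, hc⟩
    refine ⟨?_, fun u v _ _ => reflTransGen_shareSimplex_iff_exists_even_walk.2
      (hG.exists_even_walk_of_odd_loop c hc u v)⟩
    cases c with
    | nil => exact absurd hc (by simp)
    | cons h _ => exact ⟨w, _, h⟩

end

theorem bipartite_iff_nbhdComplex_disconnected_general (G : SimpleGraph V)
    (hG : G.Connected) :
    G.Colorable 2 ↔ ¬ NbhdConnected G := by
  rw [two_colorable_iff_forall_loop_even, nbhdConnected_iff_exists_odd_loop hG.preconnected]
  simp only [not_exists, Nat.not_odd_iff_even]

/-- A loopless connected finite simple graph is bipartite iff its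
neighbourhood complex is disconnected. -/
theorem bipartite_iff_nbhdComplex_disconnected [Fintype V] (G : SimpleGraph V)
    (hG : G.Connected) :
    G.Colorable 2 ↔ ¬ NbhdConnected G :=
  bipartite_iff_nbhdComplex_disconnected_general G hG
end

section
/- For any finite simple graphs G and H and any n ≥ 1, the polyhedral Hom complex Hom(G, H × I_n) is homotopy equivalent to Hom(G, H) × [0,1], where I_n is the looped path on {0,…,n} and × on graphs is the categorical product. -/
structure Graph' (V : Type) where
  Adj : V → V → Prop
  symm : ∀ {x y}, Adj x y → Adj y x

/-- A simple graph, viewed as a `Graph`. -/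
def ofSimple {V : Type} (G : SimpleGraph V) : Graph' V := ⟨G.Adj, fun h => G.adj_symm h⟩

/-- The categorical product `A × I_n`, where `I_n` is the looped path on `{0, …, n}`. -/
def Graph'.prodIn {V : Type} (A : Graph' V) (n : ℕ) : Graph' (V × Fin (n + 1)) :=
  ⟨fun p q => A.Adj p.1 q.1 ∧ |(p.2 : ℤ) - (q.2 : ℤ)| ≤ 1, by
    rintro ⟨a, i⟩ ⟨b, j⟩ ⟨h1, h2⟩
    exact ⟨A.symm h1, by rwa [abs_sub_comm]⟩⟩

/-- `η` is a multihomomorphism `T → G` (a cell of the Hom complex `Hom(T, G)`). -/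
def IsMultiHom {VT VG : Type} (T : Graph' VT) (G : Graph' VG) (η : VT → Set VG) : Prop :=
  (∀ t, (η t).Nonempty) ∧
    ∀ ⦃s t⦄, T.Adj s t → ∀ x ∈ η s, ∀ y ∈ η t, G.Adj x y

/-- A geometric model of the polyhedral Hom complex `Hom(T, G)`: points are families of
probability weights on `V(G)`, indexed by `V(T)`, whose supports form a cell. -/
def homSpace {VT VG : Type} [Fintype VT] [Fintype VG] (T : Graph' VT) (G : Graph' VG) :
    Type :=
  {x : VT → VG → ℝ // (∀ t a, 0 ≤ x t a) ∧ (∀ t, ∑ a, x t a = 1) ∧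
    IsMultiHom T G (fun t => {a | x t a ≠ 0})}

noncomputable instance {VT VG : Type} [Fintype VT] [Fintype VG] (T : Graph' VT)
    (G : Graph' VG) : TopologicalSpace (homSpace T G) := by
  unfold homSpace; infer_instance

/-! The projection `H × I_n → H` and the inclusion `h ↦ (h, n)` of the top level induce maps of
Hom complexes by pushing weights forward. One composite is the identity; the other is induced by
`(h, j) ↦ (h, n)`, which is joined to the identity by the folds `(h, j) ↦ (h, max j k)`,
`k = 0, …, n`, consecutive ones being adjacent in the graph of homomorphisms. For adjacent graph
maps `f` and `g` the straight-line homotopy between the pushforwards stays in the Hom complex,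
because every vertex in the support of a convex combination is an image under `f` or `g`, and
these images are pairwise adjacent. So `Hom(G, H × I_n) ≃ Hom(G, H)`, and `[0, 1]` is
contractible. -/

open Finset ContinuousMap

namespace Graph'

variable {U V W : Type}

@[ext]
structure Hom (A : Graph' U) (B : Graph' V) where
  toFun : U → V
  map_adj : ∀ ⦃a b⦄, A.Adj a b → B.Adj (toFun a) (toFun b)

namespace Hom

variable {A : Graph' U} {B : Graph' V} {C : Graph' W}

instance : CoeFun (Hom A B) fun _ => U → V := ⟨toFun⟩

protected def id (A : Graph' U) : Hom A A := ⟨fun a => a, fun _ _ h => h⟩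

def comp (g : Hom B C) (f : Hom A B) : Hom A C :=
  ⟨fun a => g (f a), fun _ _ h => g.map_adj (f.map_adj h)⟩

/-- Adjacency in the graph of homomorphisms `A → B` (the 1-skeleton of `Hom(A, B)`); its
reflexive-transitive closure is ×-homotopy. -/
def Adj (f g : Hom A B) : Prop := ∀ ⦃a b⦄, A.Adj a b → B.Adj (f a) (g b)

theorem adj_self (f : Hom A B) : f.Adj f := f.map_adj

theorem Adj.symm {f g : Hom A B} (h : f.Adj g) : g.Adj f :=
  fun _ _ hab => B.symm (h (A.symm hab))

end Hom

variable (A : Graph' V) (n : ℕ)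

def prodInFst : Hom (A.prodIn n) A := ⟨Prod.fst, fun _ _ h => h.1⟩

def prodInTop : Hom A (A.prodIn n) := ⟨fun a => (a, Fin.last n), fun _ _ h => ⟨h, by simp⟩⟩

def prodInRaise (k : ℕ) : Hom (A.prodIn n) (A.prodIn n) :=
  ⟨fun p => (p.1, ⟨max p.2 (min k n), by omega⟩), fun p q h => ⟨h.1, by
    have := abs_le.mp h.2
    simp only [abs_le]
    omega⟩⟩

theorem prodInFst_comp_prodInTop : (A.prodInFst n).comp (A.prodInTop n) = Hom.id A := rfl

theorem prodInRaise_zero : A.prodInRaise n 0 = Hom.id (A.prodIn n) := by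
  ext p <;> simp [prodInRaise, Hom.id]

theorem prodInRaise_self : A.prodInRaise n n = (A.prodInTop n).comp (A.prodInFst n) := by
  ext p
  · rfl
  · simp [prodInRaise, prodInTop, prodInFst, Hom.comp,
      Nat.max_eq_right (Nat.lt_succ_iff.mp p.2.2)]

theorem prodInRaise_adj_succ (k : ℕ) : (A.prodInRaise n k).Adj (A.prodInRaise n (k + 1)) :=
  fun p q h => ⟨h.1, by
    have := abs_le.mp h.2
    simp only [prodInRaise, abs_le]
    omega⟩

theorem reflTransGen_adj_id_prodInTop_comp_prodInFst :
    Relation.ReflTransGen Hom.Adj (Hom.id (A.prodIn n)) ((A.prodInTop n).comp (A.prodInFst n)) := by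
  have : ∀ k, Relation.ReflTransGen Hom.Adj (A.prodInRaise n 0) (A.prodInRaise n k) := fun k =>
    Nat.rec .refl (fun k ih => ih.tail (A.prodInRaise_adj_succ n k)) k
  simpa [prodInRaise_zero, prodInRaise_self] using this n

end Graph'

section Pushforward

open scoped Classical

variable {VT U V W : Type} [Fintype U]

noncomputable def pushforward (f : U → V) (x : VT → U → ℝ) : VT → V → ℝ :=
  fun t b => ∑ a with f a = b, x t a

theorem pushforward_nonneg (f : U → V) {x : VT → U → ℝ} (hx : ∀ t a, 0 ≤ x t a) (t : VT)
    (b : V) : 0 ≤ pushforward f x t b :=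
  sum_nonneg fun a _ => hx t a

theorem sum_pushforward [Fintype V] (f : U → V) (x : VT → U → ℝ) (t : VT) :
    ∑ b, pushforward f x t b = ∑ a, x t a :=
  sum_fiberwise univ f (x t)

theorem exists_of_pushforward_ne_zero {f : U → V} {x : VT → U → ℝ} {t : VT} {b : V}
    (h : pushforward f x t b ≠ 0) : ∃ a, x t a ≠ 0 ∧ f a = b := by
  obtain ⟨a, ha, hxa⟩ := exists_ne_zero_of_sum_ne_zero h
  exact ⟨a, hxa, (mem_filter.mp ha).2⟩

theorem pushforward_id (x : VT → U → ℝ) : pushforward (fun a => a) x = x := by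
  funext t b
  simp [pushforward, sum_filter]

theorem pushforward_pushforward [Fintype V] (f : U → V) (g : V → W) (x : VT → U → ℝ) :
    pushforward g (pushforward f x) = pushforward (fun a => g (f a)) x := by
  funext t c
  simp only [pushforward]
  rw [← sum_fiberwise_of_maps_to (g := f) (t := {b | g b = c}) (by simp)]
  exact sum_congr rfl fun b _ => sum_congr (by ext; simp_all) fun _ _ => rfl

end Pushforward

section HomSpace

open Graph'

variable {VT U V W : Type} {T : Graph' VT} {A : Graph' U} {B : Graph' V} {C : Graph' W}

theorem isMultiHom_support_of_sum_eq_one [Fintype V] {x : VT → V → ℝ}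
    (hsum : ∀ t, ∑ b, x t b = 1)
    (hadj : ∀ ⦃s t⦄, T.Adj s t → ∀ b b', x s b ≠ 0 → x t b' ≠ 0 → B.Adj b b') :
    IsMultiHom T B (fun t => {b | x t b ≠ 0}) := by
  refine ⟨fun t => ?_, fun s t h b hb b' hb' => hadj h b b' hb hb'⟩
  obtain ⟨b, -, hb⟩ := exists_ne_zero_of_sum_ne_zero (s := univ) (f := x t) (by simp [hsum t])
  exact ⟨b, hb⟩

theorem Graph'.Hom.Adj.adj_of_pushforward_ne_zero [Fintype VT] [Fintype U] {f g : Hom A B}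
    (hfg : f.Adj g) (x : homSpace T A) {s t : VT} (hst : T.Adj s t) {b b' : V}
    (hb : pushforward f x.1 s b ≠ 0) (hb' : pushforward g x.1 t b' ≠ 0) : B.Adj b b' := by
  obtain ⟨a, ha, rfl⟩ := exists_of_pushforward_ne_zero hb
  obtain ⟨a', ha', rfl⟩ := exists_of_pushforward_ne_zero hb'
  exact hfg (x.2.2.2.2 hst a ha a' ha')

theorem continuous_homSpace_apply [Fintype VT] [Fintype V] (t : VT) (b : V) :
    Continuous fun x : homSpace T B => x.1 t b :=
  (continuous_apply b).comp ((continuous_apply t).comp continuous_subtype_val)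

theorem continuous_pushforward_homSpace [Fintype VT] [Fintype U] (f : U → V) (t : VT) (b : V) :
    Continuous fun x : homSpace T A => pushforward f x.1 t b :=
  continuous_finsetSum _ fun a _ => continuous_homSpace_apply t a

namespace Graph'.Hom

variable [Fintype VT] [Fintype U] [Fintype V] [Fintype W]

noncomputable def homSpaceMap (T : Graph' VT) (f : Hom A B) : C(homSpace T A, homSpace T B) where
  toFun x := ⟨pushforward f x.1, pushforward_nonneg f x.2.1,
    fun t => by rw [sum_pushforward, x.2.2.1 t],
    isMultiHom_support_of_sum_eq_one (fun t => by rw [sum_pushforward, x.2.2.1 t])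
      fun _ _ hst _ _ => f.adj_self.adj_of_pushforward_ne_zero x hst⟩
  continuous_toFun := .subtype_mk (continuous_pi fun t => continuous_pi fun b =>
    continuous_pushforward_homSpace f t b) _

@[simp]
theorem coe_homSpaceMap_apply (T : Graph' VT) (f : Hom A B) (x : homSpace T A) :
    (homSpaceMap T f x).1 = pushforward f x.1 :=
  rfl

theorem homSpaceMap_id (T : Graph' VT) : homSpaceMap T (Hom.id A) = ContinuousMap.id _ :=
  ContinuousMap.ext fun x => Subtype.ext (pushforward_id x.1)

theorem homSpaceMap_comp (T : Graph' VT) (g : Hom B C) (f : Hom A B) :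
    homSpaceMap T (g.comp f) = (homSpaceMap T g).comp (homSpaceMap T f) :=
  ContinuousMap.ext fun x => Subtype.ext (pushforward_pushforward f g x.1).symm

noncomputable def homSpaceHomotopy (T : Graph' VT) {f g : Hom A B} (hfg : f.Adj g) :
    (homSpaceMap T f).Homotopy (homSpaceMap T g) where
  toFun p :=
    let y : VT → V → ℝ := fun t b =>
      (1 - p.1) * pushforward f p.2.1 t b + p.1 * pushforward g p.2.1 t b
    have hsum : ∀ t, ∑ b, y t b = 1 := fun t => by
      simp only [y, sum_add_distrib, ← mul_sum, sum_pushforward, p.2.2.2.1 t]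
      ring
    have hsupp : ∀ {t b},
        y t b ≠ 0 → pushforward f p.2.1 t b ≠ 0 ∨ pushforward g p.2.1 t b ≠ 0 :=
      fun h => by contrapose! h; simp [y, h]
    ⟨y, fun t b => add_nonneg
        (mul_nonneg (unitInterval.one_minus_nonneg p.1) (pushforward_nonneg f p.2.2.1 t b))
        (mul_nonneg (unitInterval.nonneg p.1) (pushforward_nonneg g p.2.2.1 t b)),
      hsum, isMultiHom_support_of_sum_eq_one hsum fun _ _ hst _ _ hb hb' => by
        rcases hsupp hb with hb | hb <;> rcases hsupp hb' with hb' | hb'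
        exacts [f.adj_self.adj_of_pushforward_ne_zero p.2 hst hb hb',
          hfg.adj_of_pushforward_ne_zero p.2 hst hb hb',
          hfg.symm.adj_of_pushforward_ne_zero p.2 hst hb hb',
          g.adj_self.adj_of_pushforward_ne_zero p.2 hst hb hb']⟩
  continuous_toFun := .subtype_mk (continuous_pi fun t => continuous_pi fun b =>
    ((continuous_const.sub (continuous_subtype_val.comp continuous_fst)).mul
        ((continuous_pushforward_homSpace f t b).comp continuous_snd)).add
      ((continuous_subtype_val.comp continuous_fst).mul
        ((continuous_pushforward_homSpace g t b).comp continuous_snd))) _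
  map_zero_left x := Subtype.ext <| by funext t b; simp
  map_one_left x := Subtype.ext <| by funext t b; simp

theorem homSpaceMap_homotopic_of_reflTransGen (T : Graph' VT) {f g : Hom A B}
    (h : Relation.ReflTransGen Adj f g) : (homSpaceMap T f).Homotopic (homSpaceMap T g) := by
  induction h with
  | refl => exact .refl _
  | tail _ hgh ih => exact ih.trans ⟨homSpaceHomotopy T hgh⟩

noncomputable def homSpaceHomotopyEquivOfRetraction (T : Graph' VT) (r : Hom A B) (i : Hom B A)
    (hri : r.comp i = Hom.id B) (hir : Relation.ReflTransGen Adj (Hom.id A) (i.comp r)) :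
    homSpace T A ≃ₕ homSpace T B where
  toFun := homSpaceMap T r
  invFun := homSpaceMap T i
  left_inv := by
    rw [← homSpaceMap_comp, ← homSpaceMap_id]
    exact (homSpaceMap_homotopic_of_reflTransGen T hir).symm
  right_inv := by rw [← homSpaceMap_comp, hri, homSpaceMap_id]

end Graph'.Hom

end HomSpace

theorem ContractibleSpace.nonempty_prod_homotopyEquiv (X Y : Type*) [TopologicalSpace X]
    [TopologicalSpace Y] [ContractibleSpace Y] : Nonempty (X × Y ≃ₕ X) := by
  obtain ⟨e⟩ := ContractibleSpace.hequiv_unit Y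
  exact ⟨((ContinuousMap.HomotopyEquiv.refl X).prodCongr e).trans
    (Homeomorph.prodPUnit X).toHomotopyEquiv⟩

instance : ContractibleSpace unitInterval :=
  (convex_Icc (0 : ℝ) 1).contractibleSpace (Set.nonempty_Icc.mpr zero_le_one)

theorem homSpace_prodIn_homotopyEquiv_general {VG VH : Type} [Fintype VG] [Fintype VH]
    (G : SimpleGraph VG) (H : SimpleGraph VH) (n : ℕ) :
    Nonempty (ContinuousMap.HomotopyEquiv
      (homSpace (ofSimple G) ((ofSimple H).prodIn n))
      (homSpace (ofSimple G) (ofSimple H) × unitInterval)) := by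
  let K := ofSimple H
  have fold := Graph'.Hom.homSpaceHomotopyEquivOfRetraction (ofSimple G) (K.prodInFst n)
    (K.prodInTop n) (K.prodInFst_comp_prodInTop n)
    (K.reflTransGen_adj_id_prodInTop_comp_prodInFst n)
  obtain ⟨e⟩ :=
    ContractibleSpace.nonempty_prod_homotopyEquiv (homSpace (ofSimple G) K) unitInterval
  exact ⟨fold.trans e.symm⟩

/-- For finite simple graphs `G, H` and `n ≥ 1`, the Hom complex
`Hom(G, H × I_n)` is homotopy equivalent to `Hom(G, H) × [0, 1]`. -/
theorem homSpace_prodIn_homotopyEquiv {VG VH : Type} [Fintype VG] [Fintype VH]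
    (G : SimpleGraph VG) (H : SimpleGraph VH) (n : ℕ) (hn : 1 ≤ n) :
    Nonempty (ContinuousMap.HomotopyEquiv
      (homSpace (ofSimple G) ((ofSimple H).prodIn n))
      (homSpace (ofSimple G) (ofSimple H) × unitInterval)) :=
  homSpace_prodIn_homotopyEquiv_general G H n
end

section
/- Let A, B, C be finite graphs with graph homomorphisms f : A → B, g : A → C, and let D_n be the double mapping cylinder of height n with canonical inclusions j₁ : B → D_n, j₂ : C → D_n. Suppose G is a graph with graph homomorphisms k₁ : B → G and k₂ : C → G and K : A × I_n → G is a graph homomorphism with K(a, n) = k₁(f(a)) and K(a, 0) = k₂(g(a)) for all vertices a of A (a ×-homotopy from k₂∘g to k₁∘f of length n). Then the map α : D_n → G defined by α = k₁ on B, α = k₂ on C, and α = K on A × I_n is a well-defined graph homomorphism satisfying α∘j₁ = k₁ and α∘j₂ = k₂. -/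
theorem cylBaseAdj_sumElim {VA VB VC VG : Type} {A : LGraph VA} {B : LGraph VB} {C : LGraph VC}
    {G : LGraph VG} {n : ℕ} (k₁ : GHom B G) (K : GHom (A.prodIn n) G) (k₂ : GHom C G)
    {x y : VB ⊕ (VA × Fin (n + 1)) ⊕ VC} (h : cylBaseAdj A B C n x y) :
    G.Adj (Sum.elim k₁.toFun (Sum.elim K.toFun k₂.toFun) x)
      (Sum.elim k₁.toFun (Sum.elim K.toFun k₂.toFun) y) := by
  rcases x with b | p | c <;> rcases y with b' | p' | c' <;> simp only [cylBaseAdj] at h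
  exacts [k₁.map_adj h, K.map_adj h, k₂.map_adj h]

section CylLift
variable {VA VB VC W : Type} {f : VA → VB} {g : VA → VC} {n : ℕ}

def CylVert.lift (k₁ : VB → W) (K : VA × Fin (n + 1) → W) (k₂ : VC → W)
    (htop : ∀ a, K (a, Fin.last n) = k₁ (f a)) (hbot : ∀ a, K (a, 0) = k₂ (g a)) :
    CylVert f g n → W :=
  Quot.lift (Sum.elim k₁ (Sum.elim K k₂)) <| by
    rintro x y (⟨a, rfl, rfl⟩ | ⟨a, rfl, rfl⟩)
    exacts [(htop a).symm, (hbot a).symm]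

def GHom.cylLift {A : LGraph VA} {B : LGraph VB} {C : LGraph VC} {G : LGraph W}
    (k₁ : GHom B G) (K : GHom (A.prodIn n) G) (k₂ : GHom C G)
    (htop : ∀ a, K.toFun (a, Fin.last n) = k₁.toFun (f a))
    (hbot : ∀ a, K.toFun (a, 0) = k₂.toFun (g a)) :
    GHom (cylGraph A B C f g n) G where
  toFun := CylVert.lift k₁.toFun K.toFun k₂.toFun htop hbot
  map_adj := by
    rintro _ _ ⟨x, y, rfl, rfl, h⟩
    exact cylBaseAdj_sumElim k₁ K k₂ h

end CylLift

theorem cylinder_universal_map_general {VA VB VC VG : Type}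
    (A : LGraph VA) (B : LGraph VB) (C : LGraph VC) (G : LGraph VG)
    (f : GHom A B) (g : GHom A C) (n : ℕ)
    (k₁ : GHom B G) (k₂ : GHom C G) (K : GHom (A.prodIn n) G)
    (hKtop : ∀ a, K.toFun (a, Fin.last n) = k₁.toFun (f.toFun a))
    (hKbot : ∀ a, K.toFun (a, 0) = k₂.toFun (g.toFun a)) :
    ∃ α : GHom (cylGraph A B C f.toFun g.toFun n) G,
      (∀ b, α.toFun (Quot.mk _ (Sum.inl b)) = k₁.toFun b) ∧
      (∀ c, α.toFun (Quot.mk _ (Sum.inr (Sum.inr c))) = k₂.toFun c) ∧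
      (∀ p : VA × Fin (n + 1), α.toFun (Quot.mk _ (Sum.inr (Sum.inl p))) = K.toFun p) :=
  ⟨k₁.cylLift K k₂ hKtop hKbot, fun _ => rfl, fun _ => rfl, fun _ => rfl⟩

/-- Given `f : A → B`, `g : A → C`, graph homomorphisms
`k₁ : B → G`, `k₂ : C → G` and a ×-homotopy `K : A × I_n → G` with `K(a, n) = k₁(f a)`
and `K(a, 0) = k₂(g a)`, the map `α : D_n → G` given by `k₁` on `B`, `k₂` on `C` and
`K` on `A × I_n` is a well-defined graph homomorphism with `α ∘ j₁ = k₁`, `α ∘ j₂ = k₂`. -/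
theorem cylinder_universal_map {VA VB VC VG : Type}
    [Fintype VA] [Fintype VB] [Fintype VC] [Fintype VG]
    (A : LGraph VA) (B : LGraph VB) (C : LGraph VC) (G : LGraph VG)
    (f : GHom A B) (g : GHom A C) (n : ℕ)
    (k₁ : GHom B G) (k₂ : GHom C G) (K : GHom (A.prodIn n) G)
    (hKtop : ∀ a, K.toFun (a, Fin.last n) = k₁.toFun (f.toFun a))
    (hKbot : ∀ a, K.toFun (a, 0) = k₂.toFun (g.toFun a)) :
    ∃ α : GHom (cylGraph A B C f.toFun g.toFun n) G,
      (∀ b, α.toFun (Quot.mk _ (Sum.inl b)) = k₁.toFun b) ∧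
      (∀ c, α.toFun (Quot.mk _ (Sum.inr (Sum.inr c))) = k₂.toFun c) ∧
      (∀ p : VA × Fin (n + 1), α.toFun (Quot.mk _ (Sum.inr (Sum.inl p))) = K.toFun p) :=
  cylinder_universal_map_general A B C G f g n k₁ k₂ K hKtop hKbot
end
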